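/- In the GJR-COGARCH method-of-moments setting (Δ, S > 0; θ, η, φ > 0; γ ∈ [0,1); γ̃ = 1 + γ²; H = γ̃² + 4γ̃ − 4; p = η − φγ̃ > 0; q = 2p − φ²HS > 0; μ = θΔ/p; E = (1 − e^{−Δp})(e^{Δp} − 1); Γ, k, M₁, M₂ as defined), the quantity M₃ := ΔkΓp²S/(M₁E) satisfies M₃ = (2p/φ + γ̃)·M₂, and consequently M₃ ≥ M₂ > 0 (using γ̃ ≥ 1). -/

import Mathlib

/-!
With `c := 2η/φ - γ̃ = 2p/φ + γ̃` and `d := 2/q - 1/p = φ²HS/(pq)`, the coefficient `k` is built so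
that `kΓ = θ²cdE/p³`. Hence the exponential correction in `M₁` cancels the first summand of `Γ`
exactly, and the `Δ²`-summand cancels `2μ²`, leaving `M₁ = 2θ²dΔ/(φ²H) = 2θ²SΔ/(pq)`.
Substituting gives `M₂ = 1 - q/(2p) = φ²HS/(2p)` and `M₃ = c · φ²HS/(2p) = c · M₂`; all of these
are positive, and `c ≥ γ̃ ≥ 1`.
-/

open Real

namespace GJRCOGARCH

lemma sq_add_four_mul_sub_four_pos {x : ℝ} (hx : 1 ≤ x) : 0 < x ^ 2 + 4 * x - 4 := by
  nlinarith

lemma one_sub_exp_neg_mul_exp_sub_one_pos {x : ℝ} (hx : 0 < x) :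
    0 < (1 - exp (-x)) * (exp x - 1) :=
  mul_pos (by linarith [exp_lt_one_iff.mpr (neg_neg_of_pos hx)])
    (by linarith [one_lt_exp_iff.mpr hx])

lemma one_sub_exp_neg_mul_div_le (Δ : ℝ) {p : ℝ} (hp : 0 < p) :
    (1 - exp (-Δ * p)) / p ≤ Δ := by
  rw [div_le_iff₀ hp, neg_mul]
  linarith [one_sub_le_exp_neg (Δ * p)]

lemma two_mul_div_sub_eq {η φ γt p : ℝ} (hφ : φ ≠ 0) (hp : p = η - φ * γt) :
    2 * η / φ - γt = 2 * p / φ + γt := by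
  rw [hp]
  field_simp
  ring

lemma Γ_pos {θ p φ c d H Δ a : ℝ} (hθ : θ ≠ 0) (hp : p ≠ 0) (hΔ : 0 < Δ) (hc : 0 ≤ c)
    (hd : 0 ≤ d) (hH : 0 ≤ H) (ha : (1 - a) / p ≤ Δ) :
    0 < 6 * (θ ^ 2 / p ^ 2) * c * d * (Δ - (1 - a) / p) + 2 * (θ ^ 2 / φ ^ 2) * d * H⁻¹ * Δ
      + 2 * (θ ^ 2 / p ^ 2) * Δ ^ 2 := by
  have hfirst : 0 ≤ 6 * (θ ^ 2 / p ^ 2) * c * d * (Δ - (1 - a) / p) :=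
    mul_nonneg (mul_nonneg (mul_nonneg (by positivity) hc) hd) (sub_nonneg.mpr ha)
  have hsecond : 0 ≤ 2 * (θ ^ 2 / φ ^ 2) * d * H⁻¹ * Δ :=
    mul_nonneg (mul_nonneg (mul_nonneg (by positivity) hd) (inv_nonneg.mpr hH)) hΔ.le
  have hthird : 0 < 2 * (θ ^ 2 / p ^ 2) * Δ ^ 2 := by positivity
  linarith

lemma k_mul_Γ_eq {θ p c d Γ k E : ℝ} (hΓ : Γ ≠ 0) (hk : k = θ ^ 2 / (Γ * p ^ 3) * c * d * E) :
    k * Γ = θ ^ 2 / p ^ 3 * c * d * E := by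
  rw [hk]
  field_simp

lemma M₁_eq {θ p φ c d H Δ a Γ k E μ M₁ : ℝ} (hp : p ≠ 0) (hΓ0 : Γ ≠ 0) (hE : E ≠ 0)
    (hΓ : Γ = 6 * (θ ^ 2 / p ^ 2) * c * d * (Δ - (1 - a) / p)
      + 2 * (θ ^ 2 / φ ^ 2) * d * H⁻¹ * Δ + 2 * (θ ^ 2 / p ^ 2) * Δ ^ 2)
    (hk : k = θ ^ 2 / (Γ * p ^ 3) * c * d * E) (hμ : μ = θ * Δ / p)
    (hM1 : M₁ = Γ - (6 * k * Γ / E) * (p * Δ - 1 + a) - 2 * μ ^ 2) :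
    M₁ = 2 * (θ ^ 2 / φ ^ 2) * d * H⁻¹ * Δ := by
  have hcancel :
      (6 * k * Γ / E) * (p * Δ - 1 + a) = 6 * (θ ^ 2 / p ^ 2) * c * d * (Δ - (1 - a) / p) := by
    rw [mul_assoc 6 k Γ, k_mul_Γ_eq hΓ0 hk]
    field_simp
    ring
  rw [hM1, hcancel, hμ, hΓ]
  ring

lemma M₂_eq {θ p φ d H Δ S μ M₁ M₂ : ℝ} (hθ : θ ≠ 0) (hp : p ≠ 0) (hΔ : Δ ≠ 0)
    (hM1 : M₁ = 2 * (θ ^ 2 / φ ^ 2) * d * H⁻¹ * Δ) (hμ : μ = θ * Δ / p)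
    (hM2 : M₂ = 1 - μ ^ 2 * S / (Δ * M₁)) :
    M₂ = 1 - φ ^ 2 * H * S / (2 * p ^ 2 * d) := by
  rw [hM2, hM1, hμ]
  field_simp

lemma M₃_eq {θ p φ c d H Δ S Γ k E M₁ M₃ : ℝ} (hθ : θ ≠ 0) (hp : p ≠ 0) (hφ : φ ≠ 0)
    (hH : H ≠ 0) (hΔ : Δ ≠ 0) (hd : d ≠ 0) (hΓ : Γ ≠ 0) (hE : E ≠ 0)
    (hk : k = θ ^ 2 / (Γ * p ^ 3) * c * d * E) (hM1 : M₁ = 2 * (θ ^ 2 / φ ^ 2) * d * H⁻¹ * Δ)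
    (hM3 : M₃ = Δ * k * Γ * p ^ 2 * S / (M₁ * E)) :
    M₃ = c * (φ ^ 2 * H * S / (2 * p)) := by
  rw [hM3, mul_assoc Δ k Γ, k_mul_Γ_eq hΓ hk, hM1]
  field_simp

end GJRCOGARCH

open GJRCOGARCH in
theorem mom_M3_formula_general
    (Δ S θ η φ γ γt H p q μ E Γ k : ℝ)
    (hΔ : 0 < Δ) (hS : 0 < S) (hθ : 0 < θ) (hφ : 0 < φ)
    (hγt : γt = 1 + γ ^ 2) (hH : H = γt ^ 2 + 4 * γt - 4)
    (hp : p = η - φ * γt) (hp0 : 0 < p)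
    (hq : q = 2 * p - φ ^ 2 * H * S) (hq0 : 0 < q)
    (hμ : μ = θ * Δ / p)
    (hE : E = (1 - Real.exp (-Δ * p)) * (Real.exp (Δ * p) - 1))
    (hΓ : Γ = 6 * (θ ^ 2 / p ^ 2) * (2 * η / φ - γt) * (2 / q - 1 / p)
            * (Δ - (1 - Real.exp (-Δ * p)) / p)
          + 2 * (θ ^ 2 / φ ^ 2) * (2 / q - 1 / p) * H⁻¹ * Δ
          + 2 * (θ ^ 2 / p ^ 2) * Δ ^ 2)
    (hk : k = (θ ^ 2 / (Γ * p ^ 3)) * (2 * η / φ - γt) * (2 / q - 1 / p) * E)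
    (M₁ M₂ M₃ : ℝ)
    (hM1 : M₁ = Γ - (6 * k * Γ / E) * (p * Δ - 1 + Real.exp (-Δ * p)) - 2 * μ ^ 2)
    (hM2 : M₂ = 1 - μ ^ 2 * S / (Δ * M₁))
    (hM3 : M₃ = Δ * k * Γ * p ^ 2 * S / (M₁ * E)) :
    M₃ = (2 * p / φ + γt) * M₂ ∧ M₂ ≤ M₃ ∧ 0 < M₂ := by
  have hγt1 : 1 ≤ γt := by rw [hγt]; linarith [sq_nonneg γ]
  have hH0 : 0 < H := hH ▸ sq_add_four_mul_sub_four_pos hγt1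
  have hc : 2 * η / φ - γt = 2 * p / φ + γt := two_mul_div_sub_eq hφ.ne' hp
  have hc1 : 1 ≤ 2 * p / φ + γt := by linarith [div_pos (mul_pos two_pos hp0) hφ]
  have h2pq : 2 * p - q = φ ^ 2 * H * S := by linarith
  have hd : 2 / q - 1 / p = φ ^ 2 * H * S / (p * q) := by
    rw [div_sub_div _ _ hq0.ne' hp0.ne', ← h2pq]; ring_nf
  have hd0 : 0 < 2 / q - 1 / p := by rw [hd]; positivity
  have hE0 : 0 < E := hE ▸ neg_mul Δ p ▸ one_sub_exp_neg_mul_exp_sub_one_pos (mul_pos hΔ hp0)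
  have hΓ0 : 0 < Γ := hΓ ▸ Γ_pos hθ.ne' hp0.ne' hΔ (by linarith) hd0.le hH0.le
    (one_sub_exp_neg_mul_div_le Δ hp0)
  have hM1' := M₁_eq hp0.ne' hΓ0.ne' hE0.ne' hΓ hk hμ hM1
  have hM2' : M₂ = φ ^ 2 * H * S / (2 * p) := by
    rw [M₂_eq hθ.ne' hp0.ne' hΔ.ne' hM1' hμ hM2, hd]
    field_simp
    linarith
  have hM3' := M₃_eq hθ.ne' hp0.ne' hφ.ne' hH0.ne' hΔ.ne' hd0.ne' hΓ0.ne' hE0.ne' hk hM1' hM3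
  have hM20 : 0 < M₂ := by rw [hM2']; positivity
  rw [← hM2', hc] at hM3'
  exact ⟨hM3', hM3' ▸ le_mul_of_one_le_left hM20.le hc1, hM20⟩

/-- In the GJR-COGARCH method-of-moments setting, the quantity `M₃ = ΔkΓp²S/(M₁E)`
satisfies `M₃ = (2p/φ + γ̃)·M₂`, and consequently `M₃ ≥ M₂ > 0` (using `γ̃ ≥ 1`). -/
theorem mom_M3_formula
    (Δ S θ η φ γ γt H p q μ E Γ k : ℝ)
    (hΔ : 0 < Δ) (hS : 0 < S) (hθ : 0 < θ) (hη : 0 < η) (hφ : 0 < φ)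
    (hγ : γ ∈ Set.Ico (0 : ℝ) 1)
    (hγt : γt = 1 + γ ^ 2) (hH : H = γt ^ 2 + 4 * γt - 4)
    (hp : p = η - φ * γt) (hp0 : 0 < p)
    (hq : q = 2 * p - φ ^ 2 * H * S) (hq0 : 0 < q)
    (hμ : μ = θ * Δ / p)
    (hE : E = (1 - Real.exp (-Δ * p)) * (Real.exp (Δ * p) - 1))
    (hΓ : Γ = 6 * (θ ^ 2 / p ^ 2) * (2 * η / φ - γt) * (2 / q - 1 / p)
            * (Δ - (1 - Real.exp (-Δ * p)) / p)
          + 2 * (θ ^ 2 / φ ^ 2) * (2 / q - 1 / p) * H⁻¹ * Δ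
          + 2 * (θ ^ 2 / p ^ 2) * Δ ^ 2)
    (hk : k = (θ ^ 2 / (Γ * p ^ 3)) * (2 * η / φ - γt) * (2 / q - 1 / p) * E)
    (M₁ M₂ M₃ : ℝ)
    (hM1 : M₁ = Γ - (6 * k * Γ / E) * (p * Δ - 1 + Real.exp (-Δ * p)) - 2 * μ ^ 2)
    (hM2 : M₂ = 1 - μ ^ 2 * S / (Δ * M₁))
    (hM3 : M₃ = Δ * k * Γ * p ^ 2 * S / (M₁ * E)) :
    M₃ = (2 * p / φ + γt) * M₂ ∧ M₂ ≤ M₃ ∧ 0 < M₂ :=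
  mom_M3_formula_general Δ S θ η φ γ γt H p q μ E Γ k hΔ hS hθ hφ hγt hH hp hp0 hq hq0 hμ hE hΓ hk
    M₁ M₂ M₃ hM1 hM2 hM3
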